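/- If the internal stages of an SDC method after K iterations have height order h̃_K (i.e. α^{[K,i]}(τ) = β^{[i]}(τ) for all trees of height ≤ h̃_K), and the (K+1)st iteration uses an EED A_Δ satisfying Σⱼ ã_{ij} ε^{[K,j]}(bamboo_{h̃_K+1}) = Σⱼ a_{ij} ε^{[K,j]}(bamboo_{h̃_K+1}), where ε^{[K,j]} = β^{[j]} − α^{[K,j]}, then the internal stages after K+1 iterations satisfy α^{[K+1,i]}(τ) = β^{[i]}(τ) for all trees τ with ht(τ) ≤ h̃_K+1 and additionally for the bamboo of size h̃_K+2; hence the stage order is at least h̃_K + 2. -/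

import Mathlib

inductive RTree where
  | node : List RTree → RTree

namespace RTree

def size : RTree → ℕ
  | .node ts => 1 + (ts.attach.map (fun x => size x.1)).sum
decreasing_by
  have := List.sizeOf_lt_of_mem x.2; simp only [RTree.node.sizeOf_spec]; omega

def height : RTree → ℕ
  | .node ts => 1 + (ts.attach.map (fun x => height x.1)).foldr max 0
decreasing_by
  have := List.sizeOf_lt_of_mem x.2; simp only [RTree.node.sizeOf_spec]; omega

def isBamboo : RTree → Prop
  | .node [] => True
  | .node [t] => isBamboo t
  | .node (_ :: _ :: _) => False

def bamboo : ℕ → RTree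
  | 0 => .node []
  | n + 1 => .node [bamboo n]

def factorial : RTree → ℕ
  | .node ts => (RTree.node ts).size * (ts.attach.map (fun x => factorial x.1)).prod
decreasing_by
  have := List.sizeOf_lt_of_mem x.2; simp only [RTree.node.sizeOf_spec]; omega

lemma size_node (ts : List RTree) : (RTree.node ts).size = 1 + (ts.map size).sum := by
  rw [size]; congr 1; rw [List.map_attach_eq_pmap]; simp

lemma height_node (ts : List RTree) : (RTree.node ts).height = 1 + (ts.map height).foldr max 0 := by
  rw [height]; congr 1; rw [List.map_attach_eq_pmap]; simp

lemma le_foldr_max {l : List ℕ} {x : ℕ} (hx : x ∈ l) : x ≤ l.foldr max 0 := by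
  induction l with
  | nil => simp at hx
  | cons y l ih =>
    simp only [List.foldr_cons]
    rcases List.mem_cons.mp hx with rfl | hx
    · exact le_max_left _ _
    · exact le_trans (ih hx) (le_max_right _ _)

lemma foldr_max_le {l : List ℕ} {b : ℕ} (h : ∀ x ∈ l, x ≤ b) : l.foldr max 0 ≤ b := by
  induction l with
  | nil => simp
  | cons y l ih =>
    simp only [List.foldr_cons, max_le_iff]
    exact ⟨h y (by simp), ih fun x hx => h x (List.mem_cons_of_mem _ hx)⟩

lemma size_pos (τ : RTree) : 1 ≤ τ.size := by
  obtain ⟨ts⟩ := τ; rw [size_node]; omega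

lemma size_bamboo (n : ℕ) : (bamboo n).size = n + 1 := by
  induction n with
  | zero => rw [bamboo, size_node]; simp
  | succ n ih => rw [bamboo, size_node]; simp [ih]; omega

lemma height_bamboo (n : ℕ) : (bamboo n).height = n + 1 := by
  induction n with
  | zero => rw [bamboo, height_node]; simp
  | succ n ih => rw [bamboo, height_node]; simp [ih]; omega

lemma sizeOf_mem_lt {ts : List RTree} {t : RTree} (h : t ∈ ts) :
    sizeOf t < sizeOf (RTree.node ts) := by
  have := List.sizeOf_lt_of_mem h
  simp only [RTree.node.sizeOf_spec]; omega

lemma height_le_size_and (τ : RTree) :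
    τ.height ≤ τ.size ∧ (τ.height = τ.size → τ = bamboo (τ.size - 1)) := by
  have main : ∀ n, ∀ τ : RTree, sizeOf τ ≤ n →
      τ.height ≤ τ.size ∧ (τ.height = τ.size → τ = bamboo (τ.size - 1)) := by
    intro n
    induction n with
    | zero => intro τ h; obtain ⟨ts⟩ := τ; simp [RTree.node.sizeOf_spec] at h
    | succ n ih =>
      rintro ⟨ts⟩ hs
      have hih : ∀ t ∈ ts, t.height ≤ t.size ∧ (t.height = t.size → t = bamboo (t.size - 1)) := by
        intro t ht
        exact ih t (by have := sizeOf_mem_lt ht; omega)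
      constructor
      · rw [height_node, size_node]
        have : (ts.map height).foldr max 0 ≤ (ts.map size).sum := by
          apply foldr_max_le
          intro x hx
          obtain ⟨t, ht, rfl⟩ := List.mem_map.mp hx
          calc t.height ≤ t.size := (hih t ht).1
            _ ≤ (ts.map size).sum := List.single_le_sum (by simp) _ (List.mem_map_of_mem ht)
        omega
      · intro heq
        match ts, hih, heq with
        | [], _, _ => simp [size_node, bamboo]
        | [t], hih, heq =>
          rw [height_node, size_node] at heq
          simp only [List.map_cons, List.map_nil, List.foldr_cons, List.foldr_nil,
            List.sum_cons, List.sum_nil] at heq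
          have ht1 := size_pos t
          have h2 : t.height = t.size := by
            have := (hih t (by simp)).1; omega
          have h3 := (hih t (by simp)).2 h2
          rw [size_node]
          simp only [List.map_cons, List.map_nil, List.sum_cons, List.sum_nil]
          have : 1 + (t.size + 0) - 1 = (t.size - 1) + 1 := by omega
          rw [this, bamboo]
          rw [← h3]
        | t1 :: t2 :: r, hih, heq =>
          exfalso
          rw [height_node, size_node] at heq
          simp only [List.map_cons, List.foldr_cons, List.sum_cons] at heq
          have hp1 := size_pos t1
          have hp2 := size_pos t2
          have h1 : t1.height ≤ t1.size := (hih t1 (by simp)).1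
          have h2 : t2.height ≤ t2.size := (hih t2 (by simp)).1
          have h3 : (List.map height r).foldr max 0 ≤ (List.map size r).sum := by
            apply foldr_max_le
            intro x hx
            obtain ⟨t, ht, rfl⟩ := List.mem_map.mp hx
            calc t.height ≤ t.size := (hih t (by simp [ht])).1
              _ ≤ (List.map size r).sum :=
                List.single_le_sum (by simp) _ (List.mem_map_of_mem ht)
          have hmax : t1.height ⊔ (t2.height ⊔ (List.map height r).foldr max 0) <
              t1.size + (t2.size + (List.map size r).sum) := by
            rw [Nat.max_lt, Nat.max_lt]
            omega
          omega
  exact main (sizeOf τ) τ le_rfl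

end RTree

open RTree


open scoped BigOperators

/-- If the internal SDC stages have height order htil and the next EED satisfies the
bamboo order-jump condition, then after one more iteration the stages agree with the
collocation stages on all trees of height ≤ htil+1 and on the bamboo of size htil+2;
hence the stage order is at least htil + 2. -/
theorem sdc_single_order_jump (s : ℕ)
    (a aΔ : Fin s → Fin s → ℝ)
    (βi αKi αK1i : Fin s → RTree → ℝ) (htil : ℕ)
    (hβi : ∀ i, ∀ π : List RTree, βi i (.node π) = ∑ j, a i j * (π.map (βi j)).prod)
    (hαK1i : ∀ i, ∀ π : List RTree, αK1i i (.node π) =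
      (∑ j, (a i j - aΔ i j) * (π.map (αKi j)).prod) +
        ∑ j, aΔ i j * (π.map (αK1i j)).prod)
    (hstage : ∀ i, ∀ τ : RTree, τ.height ≤ htil → αKi i τ = βi i τ)
    (hcond : ∀ i,
      (∑ j, aΔ i j * (βi j (RTree.bamboo htil) - αKi j (RTree.bamboo htil))) =
        ∑ j, a i j * (βi j (RTree.bamboo htil) - αKi j (RTree.bamboo htil))) :
    (∀ i, ∀ τ : RTree, τ.height ≤ htil + 1 → αK1i i τ = βi i τ) ∧
    (∀ i, αK1i i (RTree.bamboo (htil + 1)) = βi i (RTree.bamboo (htil + 1))) ∧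
    (∀ i, ∀ τ : RTree, τ.size ≤ htil + 2 → αK1i i τ = βi i τ) := by
  have part1 : ∀ n, ∀ τ : RTree, sizeOf τ ≤ n → τ.height ≤ htil + 1 →
      ∀ i, αK1i i τ = βi i τ := by
    intro n
    induction n with
    | zero => rintro ⟨ts⟩ h; simp [RTree.node.sizeOf_spec] at h
    | succ n ih =>
      rintro ⟨ts⟩ hs hh i
      have hch : ∀ t ∈ ts, t.height ≤ htil := by
        intro t ht
        rw [height_node] at hh
        have := le_foldr_max (List.mem_map_of_mem (f := height) ht)
        omega
      have hmK : ∀ j : Fin s, ts.map (αKi j) = ts.map (βi j) := by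
        intro j
        apply List.map_congr_left
        intro t ht
        exact hstage j t (hch t ht)
      have hmK1 : ∀ j : Fin s, ts.map (αK1i j) = ts.map (βi j) := by
        intro j
        apply List.map_congr_left
        intro t ht
        exact ih t (by have := sizeOf_mem_lt ht; omega) (le_trans (hch t ht) (by omega)) j
      rw [hαK1i, hβi]
      simp only [hmK, hmK1]
      rw [← Finset.sum_add_distrib]
      congr 1
      funext j
      ring
  have part1' : ∀ i, ∀ τ : RTree, τ.height ≤ htil + 1 → αK1i i τ = βi i τ :=
    fun i τ h => part1 (sizeOf τ) τ le_rfl h i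
  have part2 : ∀ i, αK1i i (RTree.bamboo (htil + 1)) = βi i (RTree.bamboo (htil + 1)) := by
    intro i
    rw [bamboo, hαK1i, hβi]
    have hb1 : ∀ j : Fin s, αK1i j (bamboo htil) = βi j (bamboo htil) :=
      fun j => part1' j _ (by rw [height_bamboo])
    simp only [List.map_cons, List.map_nil, List.prod_cons, List.prod_nil, mul_one, hb1]
    have : (∑ j, (a i j - aΔ i j) * αKi j (bamboo htil)) + ∑ j, aΔ i j * βi j (bamboo htil)
        = (∑ j, a i j * αKi j (bamboo htil)) +
          ∑ j, aΔ i j * (βi j (bamboo htil) - αKi j (bamboo htil)) := by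
      rw [← Finset.sum_add_distrib, ← Finset.sum_add_distrib]
      congr 1; funext j; ring
    rw [this, hcond i, ← Finset.sum_add_distrib]
    congr 1; funext j; ring
  refine ⟨part1', part2, ?_⟩
  intro i τ hsz
  obtain ⟨hle, hbam⟩ := height_le_size_and τ
  by_cases hh : τ.height ≤ htil + 1
  · exact part1' i τ hh
  · have hps := size_pos τ
    have heq : τ.height = τ.size := by omega
    have hsz2 : τ.size = htil + 2 := by omega
    have := hbam heq
    rw [hsz2] at this
    rw [this]
    exact part2 i
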